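/- arXiv:1506.00350 — 2 statements merged into one kernel-verified Lean document; each statement's English description precedes it below -/
import Mathlib

section
/- If β is a nonzero real number and p, d are integers with 3 ≤ p ≤ d, then the polynomial exp(βD^p)M^d has at least one nonreal complex zero. -/
/-!
The polynomial is monic of degree `d`, and since `p ≥ 3` its coefficients of `x^(d-1)` and
`x^(d-2)` vanish. By Vieta, the roots `z_i` then satisfy `∑ z_i = 0` and `∑_{i<j} z_i z_j = 0`,
hence `∑ z_i² = 0`. If all roots were real, they would all be `0`, so the polynomial would be
`x^d`; but its coefficient of `x^(d-p)` is `d! β / (d-p)! ≠ 0`.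
-/

open Polynomial Nat

/-- The polynomial `exp(βD^p)M^d`, i.e. `∑_{k=0}^{⌊d/p⌋} (d!·βᵏ/(k!·(d−pk)!))·x^{d−pk}`. -/
noncomputable def expD (β : ℂ) (p d : ℕ) : Polynomial ℂ :=
  ∑ k ∈ Finset.range (d / p + 1),
    Polynomial.C ((d ! : ℂ) * β ^ k / ((k ! : ℂ) * ((d - p * k)! : ℂ))) *
      Polynomial.X ^ (d - p * k)

namespace Multiset

variable {R : Type*} [CommSemiring R]

theorem esymm_one (s : Multiset R) : s.esymm 1 = s.sum := by
  simp [esymm, powersetCard_one, map_map]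

theorem esymm_cons_succ (a : R) (s : Multiset R) (n : ℕ) :
    (a ::ₘ s).esymm (n + 1) = s.esymm (n + 1) + a * s.esymm n := by
  simp [esymm, powersetCard_cons, map_map, sum_map_mul_left]

theorem sq_sum_eq_sum_map_sq_add_two_mul_esymm_two (s : Multiset R) :
    s.sum ^ 2 = (s.map (· ^ 2)).sum + 2 * s.esymm 2 := by
  induction s using Multiset.induction with
  | empty => simp [esymm, powersetCard_zero_right]
  | cons a s ih =>
    rw [sum_cons, map_cons, sum_cons, esymm_cons_succ, esymm_one, add_sq, ih]
    ring

end Multiset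

theorem Complex.eq_zero_of_sum_map_sq_eq_zero {s : Multiset ℂ} (hs : ∀ z ∈ s, z.im = 0)
    (h : (s.map (· ^ 2)).sum = 0) {z : ℂ} (hz : z ∈ s) : z = 0 := by
  have hsq : ∀ w ∈ s, w ^ 2 = ((w.re ^ 2 : ℝ) : ℂ) := fun w hw => by
    conv_lhs => rw [← Complex.re_add_im w, hs w hw]
    push_cast; ring
  have hre : (s.map fun w => w.re ^ 2).sum = 0 := by
    have hc : (((s.map fun w => w.re ^ 2).sum : ℝ) : ℂ) = 0 := by
      rw [← h, Multiset.map_congr rfl hsq, ← Complex.ofRealHom_eq_coe, map_multiset_sum,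
        Multiset.map_map]
      rfl
    exact_mod_cast hc
  have hle : z.re ^ 2 ≤ 0 := hre ▸
    Multiset.single_le_sum (by simp [sq_nonneg]) _ (Multiset.mem_map_of_mem _ hz)
  exact Complex.ext (by simpa using le_antisymm hle (sq_nonneg _)) (hs z hz)

namespace Polynomial

variable {R : Type*} [CommRing R] [IsDomain R] {f : R[X]}

theorem Splits.eq_X_pow_of_forall_mem_roots_eq_zero (hf : f.Splits) (hm : f.Monic)
    (h : ∀ a ∈ f.roots, a = 0) : f = X ^ f.natDegree := by
  have hroots : f.roots = Multiset.replicate f.natDegree 0 :=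
    Multiset.eq_replicate.2 ⟨splits_iff_card_roots.1 hf, h⟩
  conv_lhs => rw [hf.eq_prod_roots_of_monic hm, hroots]
  simp

theorem Splits.sum_map_sq_roots (hf : f.Splits) (hm : f.Monic) (hn : 2 ≤ f.natDegree) :
    (f.roots.map (· ^ 2)).sum = f.coeff (f.natDegree - 1) ^ 2 - 2 * f.coeff (f.natDegree - 2) := by
  have hcard := splits_iff_card_roots.1 hf
  have h1 := coeff_eq_esymm_roots_of_card hcard (k := f.natDegree - 1) (by omega)
  have h2 := coeff_eq_esymm_roots_of_card hcard (k := f.natDegree - 2) (by omega)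
  rw [show f.natDegree - (f.natDegree - 1) = 1 by omega, hm.leadingCoeff,
    Multiset.esymm_one] at h1
  rw [show f.natDegree - (f.natDegree - 2) = 2 by omega, hm.leadingCoeff] at h2
  rw [h1, h2]
  linear_combination -Multiset.sq_sum_eq_sum_map_sq_add_two_mul_esymm_two f.roots

theorem eq_X_pow_of_forall_isRoot_im_eq_zero {q : ℂ[X]} (hm : q.Monic) (hn : 2 ≤ q.natDegree)
    (h₁ : q.coeff (q.natDegree - 1) = 0) (h₂ : q.coeff (q.natDegree - 2) = 0)
    (hreal : ∀ z, q.IsRoot z → z.im = 0) : q = X ^ q.natDegree := by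
  have hf := IsAlgClosed.splits q
  have hsq : (q.roots.map (· ^ 2)).sum = 0 := by
    rw [hf.sum_map_sq_roots hm hn, h₁, h₂]
    ring
  exact hf.eq_X_pow_of_forall_mem_roots_eq_zero hm fun z hz =>
    Complex.eq_zero_of_sum_map_sq_eq_zero (fun w hw => hreal w (isRoot_of_mem_roots hw)) hsq hz

end Polynomial

section expD

variable {β : ℂ} {p d : ℕ}

theorem mul_le_of_mem_range_div_add_one {k : ℕ} (hk : k ∈ Finset.range (d / p + 1)) :
    p * k ≤ d :=
  (Nat.mul_le_mul_left p (Nat.lt_succ_iff.1 (Finset.mem_range.1 hk))).trans (Nat.mul_div_le d p)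

theorem coeff_expD_sub_mul (hp : 0 < p) {k : ℕ} (hk : p * k ≤ d) :
    (expD β p d).coeff (d - p * k) = d ! * β ^ k / (k ! * (d - p * k)!) := by
  rw [expD, finsetSum_coeff, Finset.sum_eq_single k]
  · simp
  · intro j hj hjk
    have hjd := mul_le_of_mem_range_div_add_one hj
    have : p * j ≠ p * k := fun h => hjk (Nat.eq_of_mul_eq_mul_left hp h)
    rw [coeff_C_mul_X_pow, if_neg (by omega)]
  · intro hk'
    exact (hk' (Finset.mem_range_succ_iff.2 ((Nat.le_div_iff_mul_le hp).2 (by linarith)))).elim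

theorem coeff_expD_eq_zero_of_not_dvd {n : ℕ} (h : ¬ p ∣ d - n) : (expD β p d).coeff n = 0 := by
  rw [expD, finsetSum_coeff]
  refine Finset.sum_eq_zero fun k hk => ?_
  have hkd := mul_le_of_mem_range_div_add_one hk
  rw [coeff_C_mul_X_pow, if_neg]
  rintro rfl
  exact h ⟨k, by omega⟩

theorem natDegree_expD_le : (expD β p d).natDegree ≤ d :=
  natDegree_sum_le_of_forall_le _ _ fun _ _ =>
    (natDegree_C_mul_X_pow_le _ _).trans (Nat.sub_le d _)

theorem coeff_expD_self (hp : 0 < p) : (expD β p d).coeff d = 1 := by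
  simpa [Nat.factorial_ne_zero] using coeff_expD_sub_mul (β := β) (d := d) hp (k := 0) (by simp)

theorem monic_expD (hp : 0 < p) : (expD β p d).Monic :=
  monic_of_natDegree_le_of_coeff_eq_one d natDegree_expD_le (coeff_expD_self hp)

theorem natDegree_expD (hp : 0 < p) : (expD β p d).natDegree = d :=
  natDegree_expD_le.antisymm (le_natDegree_of_ne_zero (by simp [coeff_expD_self hp]))

end expD

/-- If `β ≠ 0` is real and `3 ≤ p ≤ d`, then `exp(βD^p)M^d` has a nonreal zero. -/
theorem stmt7 (β : ℝ) (hβ : β ≠ 0) (p d : ℕ) (hp : 3 ≤ p) (hpd : p ≤ d) :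
    ∃ z : ℂ, (expD (β : ℂ) p d).IsRoot z ∧ z.im ≠ 0 := by
  have hp0 : 0 < p := by omega
  have hdeg := natDegree_expD (β := β) hp0 (d := d)
  have hgap {j : ℕ} (hj₀ : 0 < j) (hjp : j < p) : (expD (β : ℂ) p d).coeff (d - j) = 0 :=
    coeff_expD_eq_zero_of_not_dvd fun h => by
      have := Nat.le_of_dvd (by omega) h
      omega
  by_contra! hreal
  have hX := eq_X_pow_of_forall_isRoot_im_eq_zero (monic_expD hp0) (by omega)
    (by rw [hdeg]; exact hgap one_pos (by omega))
    (by rw [hdeg]; exact hgap two_pos (by omega)) hreal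
  have hcoeff := coeff_expD_sub_mul (β := β) (d := d) hp0 (k := 1) (by omega)
  rw [hX, hdeg, coeff_X_pow, if_neg (by omega : d - p * 1 ≠ d)] at hcoeff
  simp [eq_comm, hβ, Nat.factorial_ne_zero] at hcoeff
end

section
/- Let ⟨Bₙ⟩ be an increasing sequence of positive real numbers such that Bₘ·Bₙ ≤ B₀·B_{m+n} for all m, n ≥ 0. Let φ and ψ be formal power series with complex coefficients satisfying φ ≺ ⟨n!Bₙ⟩ and ψ ≺ ⟨n!Bₙ⟩, and let f be an entire function with f ≺ ⟨(n!Bₙ)^{−1}⟩. Then: (i) the product power series φψ satisfies φψ ≺ ⟨n!Bₙ⟩; (ii) f ∈ dom φ(D); (iii) φ(D)f ≺ ⟨(n!Bₙ)^{−1}⟩; and (iv) φ(D)f ∈ dom ψ(D) with ψ(D)(φ(D)f) = (φψ)(D)f. -/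
/-!
Write `wₙ = (1 + n)^e / (n! Bₙ)` for the weights in `f ≺ ⟨(n!Bₙ)⁻¹⟩`. Expanding `f⁽ⁿ⁾` in its
Taylor series at `0` and using that `B` is increasing gives `‖f⁽ⁿ⁾(z)‖ ≤ C(R) wₙ` on the disc of
radius `R`, so the terms of `∑ aₙ f⁽ⁿ⁾` are dominated by `C (1 + n)^(e + e') / n!` there: the
series converges locally uniformly (Weierstrass M-test) and commutes with differentiation.
Submultiplicativity, together with `m! n! ≤ (m + n)!`, gives `w_{m+n} ≤ B₀ wₘ wₙ`. This controls
the derivatives of `φ(D)f` at `0`, the coefficients of `φψ`, and makes the double series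
`∑ₘ ∑ₙ bₘ aₙ f⁽ᵐ⁺ⁿ⁾` absolutely summable, so that it can be regrouped along antidiagonals into
`(φψ)(D)f`.
-/

open Nat

/-- `domSeq phi f g` : the partial sums of `∑ₙ (coeff n phi)·f⁽ⁿ⁾` converge to `g`
uniformly on compact subsets of `ℂ`; i.e. `f ∈ dom phi(D)` and `phi(D)f = g`. -/
def domSeq (phi : PowerSeries ℂ) (f g : ℂ → ℂ) : Prop :=
  TendstoLocallyUniformly
    (fun (N : ℕ) (z : ℂ) =>
      ∑ n ∈ Finset.range N, (PowerSeries.coeff n) phi * iteratedDeriv n f z)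
    g Filter.atTop

/-- `phi ≺ ⟨n!Bₙ⟩` for a formal power series `phi` (note `phi⁽ⁿ⁾(0) = n!·(coeff n phi)`). -/
def psPrec (B : ℕ → ℝ) (phi : PowerSeries ℂ) : Prop :=
  ∃ c : ℝ, 0 < c ∧ ∃ e : ℝ, 0 ≤ e ∧ ∀ n : ℕ,
    ‖(n ! : ℂ) * (PowerSeries.coeff n) phi‖ <
      c * (1 + (n : ℝ)) ^ e * ((n ! : ℝ) * B n)

/-- `h ≺ ⟨(n!Bₙ)⁻¹⟩` for an entire function `h`. -/
def funPrecInv (B : ℕ → ℝ) (h : ℂ → ℂ) : Prop :=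
  ∃ c : ℝ, 0 < c ∧ ∃ e : ℝ, 0 ≤ e ∧ ∀ n : ℕ,
    ‖iteratedDeriv n h 0‖ < c * (1 + (n : ℝ)) ^ e * ((n ! : ℝ) * B n)⁻¹

open Finset Filter

noncomputable def polyExpTerm (e r : ℝ) (k : ℕ) : ℝ := (1 + k) ^ e * r ^ k / k !

noncomputable def polyExpSum (e r : ℝ) : ℝ := ∑' k, polyExpTerm e r k

theorem polyExpTerm_nonneg (e : ℝ) {r : ℝ} (hr : 0 ≤ r) (k : ℕ) : 0 ≤ polyExpTerm e r k := by
  unfold polyExpTerm; positivity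

theorem summable_polyExpTerm (e : ℝ) {r : ℝ} (hr : 0 ≤ r) : Summable (polyExpTerm e r) := by
  refine (Real.summable_pow_div_factorial (Real.exp |e| * r)).of_nonneg_of_le
    (polyExpTerm_nonneg e hr) fun k => ?_
  have hk : (1 + (k : ℝ)) ^ e ≤ Real.exp |e| ^ k :=
    calc (1 + (k : ℝ)) ^ e ≤ (1 + (k : ℝ)) ^ |e| :=
          Real.rpow_le_rpow_of_exponent_le (by linarith [k.cast_nonneg (α := ℝ)]) (le_abs_self e)
      _ ≤ Real.exp k ^ |e| :=
          Real.rpow_le_rpow (by positivity) (by linarith [Real.add_one_le_exp k]) (abs_nonneg e)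
      _ = Real.exp |e| ^ k := by rw [← Real.exp_mul, ← Real.exp_nat_mul, mul_comm]
  rw [polyExpTerm, mul_pow]
  gcongr

theorem one_add_rpow_add_le {e : ℝ} (he : 0 ≤ e) (m n : ℕ) :
    (1 + ((m + n : ℕ) : ℝ)) ^ e ≤ (1 + m) ^ e * (1 + n) ^ e := by
  rw [← Real.mul_rpow (by positivity) (by positivity)]
  gcongr
  push_cast
  nlinarith [m.cast_nonneg (α := ℝ), n.cast_nonneg (α := ℝ)]

section Weights

variable {B : ℕ → ℝ}

noncomputable def derivWeight (B : ℕ → ℝ) (e : ℝ) (n : ℕ) : ℝ := (1 + n) ^ e * ((n ! : ℝ) * B n)⁻¹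

theorem derivWeight_pos (hBpos : ∀ n, 0 < B n) (e : ℝ) (n : ℕ) : 0 < derivWeight B e n := by
  have := hBpos n
  unfold derivWeight; positivity

theorem rpow_mul_mul_derivWeight {n : ℕ} (hBn : B n ≠ 0) (e e' : ℝ) :
    (1 + n) ^ e' * B n * derivWeight B e n = polyExpTerm (e' + e) 1 n := by
  rw [derivWeight, polyExpTerm, Real.rpow_add (by positivity), one_pow]
  field_simp

theorem derivWeight_add_le_of_monotone (hBpos : ∀ n, 0 < B n) (hBmono : Monotone B) {e : ℝ}
    (he : 0 ≤ e) (n k : ℕ) : derivWeight B e (n + k) ≤ (1 + k) ^ e * derivWeight B e n := by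
  have hBn := hBpos n
  have hBnk := hBpos (n + k)
  have hfac : (n ! : ℝ) * B n ≤ ((n + k)! : ℝ) * B (n + k) :=
    mul_le_mul (by exact_mod_cast factorial_le (le_add_right n k)) (hBmono (le_add_right n k))
      hBn.le (by positivity)
  calc derivWeight B e (n + k) ≤ ((1 + n) ^ e * (1 + k) ^ e) * ((n ! : ℝ) * B n)⁻¹ :=
        mul_le_mul (one_add_rpow_add_le he n k) (inv_anti₀ (by positivity) hfac)
          (by positivity) (by positivity)
    _ = (1 + k) ^ e * derivWeight B e n := by rw [derivWeight]; ring

theorem derivWeight_add_le (hBpos : ∀ n, 0 < B n)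
    (hBsub : ∀ m n : ℕ, B m * B n ≤ B 0 * B (m + n)) {e : ℝ} (he : 0 ≤ e) (m n : ℕ) :
    derivWeight B e (m + n) ≤ B 0 * derivWeight B e m * derivWeight B e n := by
  have hBm := hBpos m
  have hBn := hBpos n
  have hBmn := hBpos (m + n)
  have hfac : ((m ! : ℝ) * B m) * ((n ! : ℝ) * B n) ≤ B 0 * (((m + n)! : ℝ) * B (m + n)) :=
    calc ((m ! : ℝ) * B m) * ((n ! : ℝ) * B n) = ((m ! * n ! : ℕ) : ℝ) * (B m * B n) := by
          push_cast; ring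
      _ ≤ ((m + n)! : ℝ) * (B 0 * B (m + n)) := by
          have := le_of_dvd (factorial_pos _) (factorial_mul_factorial_dvd_factorial_add m n)
          exact mul_le_mul (by exact_mod_cast this) (hBsub m n) (by positivity) (by positivity)
      _ = B 0 * (((m + n)! : ℝ) * B (m + n)) := by ring
  have hinv : (((m + n)! : ℝ) * B (m + n))⁻¹ ≤ B 0 * (((m ! : ℝ) * B m) * ((n ! : ℝ) * B n))⁻¹ := by
    rw [← div_eq_mul_inv, le_div_iff₀ (by positivity), inv_mul_le_iff₀ (by positivity)]
    linarith
  calc derivWeight B e (m + n)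
      ≤ ((1 + m) ^ e * (1 + n) ^ e) * (B 0 * (((m ! : ℝ) * B m) * ((n ! : ℝ) * B n))⁻¹) :=
        mul_le_mul (one_add_rpow_add_le he m n) hinv (by positivity) (by positivity)
    _ = B 0 * derivWeight B e m * derivWeight B e n := by simp only [derivWeight, mul_inv]; ring

end Weights

theorem iteratedDeriv_iteratedDeriv {𝕜 F : Type*} [NontriviallyNormedField 𝕜]
    [NormedAddCommGroup F] [NormedSpace 𝕜 F] (f : 𝕜 → F) (m n : ℕ) :
    iteratedDeriv n (iteratedDeriv m f) = iteratedDeriv (n + m) f := by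
  simp only [iteratedDeriv_eq_iterate, Function.iterate_add_apply]

theorem Differentiable.iteratedDeriv_complex {F : Type*} [NormedAddCommGroup F] [NormedSpace ℂ F]
    [CompleteSpace F] {f : ℂ → F} (hf : Differentiable ℂ f) (n : ℕ) :
    Differentiable ℂ (iteratedDeriv n f) :=
  (hf.contDiff (n := ⊤)).differentiable_iteratedDeriv n (WithTop.coe_lt_top _)

theorem TendstoLocallyUniformly.iteratedDeriv_complex {ι : Type*} {l : Filter ι}
    {F : ι → ℂ → ℂ} {G : ℂ → ℂ} (hF : ∀ i, Differentiable ℂ (F i))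
    (h : TendstoLocallyUniformly F G l) (m : ℕ) :
    TendstoLocallyUniformly (fun i => iteratedDeriv m (F i)) (iteratedDeriv m G) l := by
  induction m with
  | zero => simpa using h
  | succ m ih =>
    simp only [iteratedDeriv_succ, ← tendstoLocallyUniformlyOn_univ] at ih ⊢
    exact ih.deriv (Eventually.of_forall fun i => ((hF i).iteratedDeriv_complex m).differentiableOn)
      isOpen_univ

theorem norm_le_of_norm_iteratedDeriv_zero_le {h : ℂ → ℂ} (hh : Differentiable ℂ h) {C e R : ℝ}
    (hbound : ∀ k : ℕ, ‖iteratedDeriv k h 0‖ ≤ C * (1 + k) ^ e) {z : ℂ} (hz : ‖z‖ ≤ R) :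
    ‖h z‖ ≤ C * polyExpSum e R := by
  have hR : 0 ≤ R := (norm_nonneg z).trans hz
  rw [← Complex.taylorSeries_eq_of_entire hh 0 z]
  refine tsum_of_norm_bounded ((summable_polyExpTerm e hR).hasSum.mul_left C) fun k => ?_
  rw [norm_smul, norm_smul, norm_inv, Complex.norm_natCast, norm_pow, sub_zero]
  calc (k ! : ℝ)⁻¹ * (‖z‖ ^ k * ‖iteratedDeriv k h 0‖)
      ≤ (k ! : ℝ)⁻¹ * (R ^ k * (C * (1 + k) ^ e)) := by
        gcongr
        exact hbound k
    _ = C * polyExpTerm e R k := by rw [polyExpTerm]; ring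

section Bounds

variable {B : ℕ → ℝ} {c e : ℝ} {f : ℂ → ℂ}

def IterDerivBound (B : ℕ → ℝ) (c e : ℝ) (f : ℂ → ℂ) : Prop :=
  ∀ n : ℕ, ‖iteratedDeriv n f 0‖ ≤ c * derivWeight B e n

def CoeffBound (B : ℕ → ℝ) (c e : ℝ) (phi : PowerSeries ℂ) : Prop :=
  ∀ n : ℕ, ‖PowerSeries.coeff n phi‖ ≤ c * (1 + n) ^ e * B n

theorem IterDerivBound.const_nonneg (hB0 : 0 < B 0) (hf : IterDerivBound B c e f) : 0 ≤ c := by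
  have h := (norm_nonneg _).trans (hf 0)
  simp only [derivWeight, CharP.cast_eq_zero, add_zero, Real.one_rpow, factorial_zero, cast_one,
    one_mul] at h
  exact nonneg_of_mul_nonneg_left h (inv_pos.mpr hB0)

theorem CoeffBound.const_nonneg {phi : PowerSeries ℂ} (hB0 : 0 < B 0)
    (hphi : CoeffBound B c e phi) : 0 ≤ c := by
  have h := (norm_nonneg _).trans (hphi 0)
  simp only [CharP.cast_eq_zero, add_zero, Real.one_rpow, mul_one] at h
  exact nonneg_of_mul_nonneg_left h hB0

theorem funPrecInv.exists_iterDerivBound (h : funPrecInv B f) :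
    ∃ c e, 0 ≤ e ∧ IterDerivBound B c e f := by
  obtain ⟨c, -, e, he, h⟩ := h
  exact ⟨c, e, he, fun n => by rw [derivWeight, ← mul_assoc]; exact (h n).le⟩

theorem psPrec.exists_coeffBound {phi : PowerSeries ℂ} (h : psPrec B phi) :
    ∃ c e, 0 ≤ e ∧ CoeffBound B c e phi := by
  obtain ⟨c, -, e, he, h⟩ := h
  refine ⟨c, e, he, fun n => ?_⟩
  have hn : (0 : ℝ) < n ! := by positivity
  have := h n
  rw [norm_mul, Complex.norm_natCast] at this
  nlinarith

theorem funPrecInv_of_iterDerivBound (hBpos : ∀ n, 0 < B n) (he : 0 ≤ e)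
    (hf : IterDerivBound B c e f) : funPrecInv B f := by
  have hc := hf.const_nonneg (hBpos 0)
  refine ⟨c + 1, by positivity, e, he, fun n => ?_⟩
  have hw := derivWeight_pos hBpos e n
  calc ‖iteratedDeriv n f 0‖ ≤ c * derivWeight B e n := hf n
    _ < (c + 1) * derivWeight B e n := by linarith
    _ = (c + 1) * (1 + (n : ℝ)) ^ e * ((n ! : ℝ) * B n)⁻¹ := by rw [derivWeight]; ring

theorem psPrec_of_coeffBound (hBpos : ∀ n, 0 < B n) (he : 0 ≤ e) {phi : PowerSeries ℂ}
    (hphi : CoeffBound B c e phi) : psPrec B phi := by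
  have hc := hphi.const_nonneg (hBpos 0)
  refine ⟨c + 1, by positivity, e, he, fun n => ?_⟩
  have hw : 0 < (n ! : ℝ) * ((1 + n) ^ e * B n) := by have := hBpos n; positivity
  calc ‖(n ! : ℂ) * PowerSeries.coeff n phi‖ = (n ! : ℝ) * ‖PowerSeries.coeff n phi‖ := by
        rw [norm_mul, Complex.norm_natCast]
    _ ≤ c * ((n ! : ℝ) * ((1 + n) ^ e * B n)) := by
        have := mul_le_mul_of_nonneg_left (hphi n) (by positivity : (0 : ℝ) ≤ n !)
        linarith
    _ < (c + 1) * ((n ! : ℝ) * ((1 + n) ^ e * B n)) := by linarith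
    _ = (c + 1) * (1 + (n : ℝ)) ^ e * ((n ! : ℝ) * B n) := by ring

end Bounds

-- The paper's `phi(D) f`, as a pointwise sum.
noncomputable def diffOp (phi : PowerSeries ℂ) (f : ℂ → ℂ) : ℂ → ℂ :=
  fun z => ∑' n, PowerSeries.coeff n phi * iteratedDeriv n f z

section DiffOp

variable {B : ℕ → ℝ} {c c' e e' : ℝ} {f : ℂ → ℂ} {phi : PowerSeries ℂ}

theorem IterDerivBound.norm_iteratedDeriv_le (hBpos : ∀ n, 0 < B n) (hBmono : Monotone B)
    (he : 0 ≤ e) (hfd : Differentiable ℂ f) (hf : IterDerivBound B c e f) {R : ℝ} {z : ℂ}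
    (hz : ‖z‖ ≤ R) (n : ℕ) :
    ‖iteratedDeriv n f z‖ ≤ c * polyExpSum e R * derivWeight B e n := by
  have hc := hf.const_nonneg (hBpos 0)
  have hTaylor : ∀ k : ℕ, ‖iteratedDeriv k (iteratedDeriv n f) 0‖
      ≤ c * derivWeight B e n * (1 + k) ^ e := fun k => by
    rw [iteratedDeriv_iteratedDeriv, add_comm]
    calc ‖iteratedDeriv (n + k) f 0‖ ≤ c * derivWeight B e (n + k) := hf _
      _ ≤ c * ((1 + k) ^ e * derivWeight B e n) :=
          mul_le_mul_of_nonneg_left (derivWeight_add_le_of_monotone hBpos hBmono he n k) hc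
      _ = c * derivWeight B e n * (1 + k) ^ e := by ring
  calc ‖iteratedDeriv n f z‖ ≤ c * derivWeight B e n * polyExpSum e R :=
        norm_le_of_norm_iteratedDeriv_zero_le (hfd.iteratedDeriv_complex n) hTaylor hz
    _ = c * polyExpSum e R * derivWeight B e n := by ring

theorem norm_coeff_mul_iteratedDeriv_le (hBpos : ∀ n, 0 < B n) (hBmono : Monotone B)
    (he : 0 ≤ e) (hphi : CoeffBound B c' e' phi) (hfd : Differentiable ℂ f)
    (hf : IterDerivBound B c e f) {R : ℝ} {z : ℂ} (hz : ‖z‖ ≤ R) (n : ℕ) :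
    ‖PowerSeries.coeff n phi * iteratedDeriv n f z‖
      ≤ c' * c * polyExpSum e R * polyExpTerm (e' + e) 1 n := by
  have hc' := hphi.const_nonneg (hBpos 0)
  have hBn := hBpos n
  rw [norm_mul]
  calc ‖PowerSeries.coeff n phi‖ * ‖iteratedDeriv n f z‖
      ≤ (c' * (1 + n) ^ e' * B n) * (c * polyExpSum e R * derivWeight B e n) :=
        mul_le_mul (hphi n) (hf.norm_iteratedDeriv_le hBpos hBmono he hfd hz n) (norm_nonneg _)
          (by positivity)
    _ = c' * c * polyExpSum e R * ((1 + n) ^ e' * B n * derivWeight B e n) := by ring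
    _ = c' * c * polyExpSum e R * polyExpTerm (e' + e) 1 n := by
        rw [rpow_mul_mul_derivWeight hBn.ne']

theorem domSeq_diffOp (hBpos : ∀ n, 0 < B n) (hBmono : Monotone B) (he : 0 ≤ e)
    (hphi : CoeffBound B c' e' phi) (hfd : Differentiable ℂ f) (hf : IterDerivBound B c e f) :
    domSeq phi f (diffOp phi f) := by
  refine tendstoLocallyUniformly_iff_forall_isCompact.mpr fun K hK => ?_
  obtain ⟨R, hKR⟩ := hK.isBounded.subset_closedBall 0
  exact tendstoUniformlyOn_tsum_nat
    ((summable_polyExpTerm (e' + e) zero_le_one).mul_left (c' * c * polyExpSum e R))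
    fun n z hz => norm_coeff_mul_iteratedDeriv_le hBpos hBmono he hphi hfd hf
      (mem_closedBall_zero_iff.mp (hKR hz)) n

theorem differentiable_partialSum (hfd : Differentiable ℂ f) (N : ℕ) :
    Differentiable ℂ fun z => ∑ n ∈ range N, PowerSeries.coeff n phi * iteratedDeriv n f z :=
  Differentiable.fun_sum fun n _ => (hfd.iteratedDeriv_complex n).const_mul _

theorem differentiable_diffOp (hBpos : ∀ n, 0 < B n) (hBmono : Monotone B) (he : 0 ≤ e)
    (hphi : CoeffBound B c' e' phi) (hfd : Differentiable ℂ f) (hf : IterDerivBound B c e f) :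
    Differentiable ℂ (diffOp phi f) := by
  have h := domSeq_diffOp hBpos hBmono he hphi hfd hf
  rw [domSeq, ← tendstoLocallyUniformlyOn_univ] at h
  exact differentiableOn_univ.mp <| h.differentiableOn
    (Eventually.of_forall fun N => (differentiable_partialSum hfd N).differentiableOn) isOpen_univ

theorem iterDerivBound_iteratedDeriv (hBpos : ∀ n, 0 < B n)
    (hBsub : ∀ m n : ℕ, B m * B n ≤ B 0 * B (m + n)) (he : 0 ≤ e)
    (hf : IterDerivBound B c e f) (m : ℕ) :
    IterDerivBound B (c * B 0 * derivWeight B e m) e (iteratedDeriv m f) := fun n => by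
  rw [iteratedDeriv_iteratedDeriv, add_comm]
  calc ‖iteratedDeriv (m + n) f 0‖ ≤ c * derivWeight B e (m + n) := hf _
    _ ≤ c * (B 0 * derivWeight B e m * derivWeight B e n) :=
        mul_le_mul_of_nonneg_left (derivWeight_add_le hBpos hBsub he m n)
          (hf.const_nonneg (hBpos 0))
    _ = c * B 0 * derivWeight B e m * derivWeight B e n := by ring

theorem iteratedDeriv_diffOp (hBpos : ∀ n, 0 < B n) (hBmono : Monotone B)
    (hBsub : ∀ m n : ℕ, B m * B n ≤ B 0 * B (m + n)) (he : 0 ≤ e)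
    (hphi : CoeffBound B c' e' phi) (hfd : Differentiable ℂ f) (hf : IterDerivBound B c e f)
    (m : ℕ) : iteratedDeriv m (diffOp phi f) = diffOp phi (iteratedDeriv m f) := by
  have hlim := (domSeq_diffOp hBpos hBmono he hphi hfd hf).iteratedDeriv_complex
    (differentiable_partialSum hfd) m
  have hlim' := domSeq_diffOp hBpos hBmono he hphi (hfd.iteratedDeriv_complex m)
    (iterDerivBound_iteratedDeriv hBpos hBsub he hf m)
  have hpartial : ∀ N, iteratedDeriv m
      (fun z => ∑ n ∈ range N, PowerSeries.coeff n phi * iteratedDeriv n f z)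
      = fun z =>
        ∑ n ∈ range N, PowerSeries.coeff n phi * iteratedDeriv n (iteratedDeriv m f) z := by
    intro N
    funext z
    rw [iteratedDeriv_fun_sum fun n _ =>
      ((hfd.iteratedDeriv_complex n).const_mul _).contDiff.contDiffAt]
    refine sum_congr rfl fun n _ => ?_
    rw [iteratedDeriv_const_mul_field, iteratedDeriv_iteratedDeriv, iteratedDeriv_iteratedDeriv,
      add_comm]
  simp only [hpartial] at hlim
  rw [domSeq, ← tendstoLocallyUniformlyOn_univ] at hlim'
  rw [← tendstoLocallyUniformlyOn_univ] at hlim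
  funext z
  exact tendsto_nhds_unique (hlim.tendsto_at (Set.mem_univ z)) (hlim'.tendsto_at (Set.mem_univ z))

theorem iterDerivBound_diffOp (hBpos : ∀ n, 0 < B n) (hBmono : Monotone B)
    (hBsub : ∀ m n : ℕ, B m * B n ≤ B 0 * B (m + n)) (he : 0 ≤ e)
    (hphi : CoeffBound B c' e' phi) (hfd : Differentiable ℂ f) (hf : IterDerivBound B c e f) :
    IterDerivBound B (c' * c * B 0 * polyExpSum e 0 * polyExpSum (e' + e) 1) e (diffOp phi f) :=
  fun m => by
  rw [iteratedDeriv_diffOp hBpos hBmono hBsub he hphi hfd hf]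
  calc ‖diffOp phi (iteratedDeriv m f) 0‖
      ≤ c' * (c * B 0 * derivWeight B e m) * polyExpSum e 0 * polyExpSum (e' + e) 1 :=
        tsum_of_norm_bounded ((summable_polyExpTerm (e' + e) zero_le_one).hasSum.mul_left _)
          (norm_coeff_mul_iteratedDeriv_le hBpos hBmono he hphi (hfd.iteratedDeriv_complex m)
            (iterDerivBound_iteratedDeriv hBpos hBsub he hf m) (by simp))
    _ = c' * c * B 0 * polyExpSum e 0 * polyExpSum (e' + e) 1 * derivWeight B e m := by ring

end DiffOp

theorem CoeffBound.mul {B : ℕ → ℝ} {c₁ c₂ e₁ e₂ : ℝ} {phi psi : PowerSeries ℂ}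
    (hBpos : ∀ n, 0 < B n) (hBsub : ∀ m n : ℕ, B m * B n ≤ B 0 * B (m + n))
    (he₁ : 0 ≤ e₁) (he₂ : 0 ≤ e₂) (hphi : CoeffBound B c₁ e₁ phi) (hpsi : CoeffBound B c₂ e₂ psi) :
    CoeffBound B (c₁ * c₂ * B 0) (e₁ + e₂ + 1) (phi * psi) := fun N => by
  have hc₁ := hphi.const_nonneg (hBpos 0)
  have hc₂ := hpsi.const_nonneg (hBpos 0)
  have hterm : ∀ p ∈ antidiagonal N, ‖PowerSeries.coeff p.1 phi * PowerSeries.coeff p.2 psi‖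
      ≤ c₁ * c₂ * B 0 * ((1 + N) ^ e₁ * (1 + N) ^ e₂) * B N := by
    rintro ⟨i, j⟩ hij
    rw [HasAntidiagonal.mem_antidiagonal] at hij
    subst hij
    have hBi := hBpos i
    have hBj := hBpos j
    have hi : (1 + i : ℝ) ^ e₁ ≤ (1 + ((i + j : ℕ) : ℝ)) ^ e₁ := by gcongr; linarith
    have hj : (1 + j : ℝ) ^ e₂ ≤ (1 + ((i + j : ℕ) : ℝ)) ^ e₂ := by gcongr; linarith
    rw [norm_mul]
    calc ‖PowerSeries.coeff i phi‖ * ‖PowerSeries.coeff j psi‖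
        ≤ (c₁ * (1 + i) ^ e₁ * B i) * (c₂ * (1 + j) ^ e₂ * B j) :=
          mul_le_mul (hphi i) (hpsi j) (norm_nonneg _) (by positivity)
      _ = c₁ * c₂ * ((1 + i) ^ e₁ * (1 + j) ^ e₂) * (B i * B j) := by ring
      _ ≤ c₁ * c₂ * ((1 + ((i + j : ℕ) : ℝ)) ^ e₁ * (1 + ((i + j : ℕ) : ℝ)) ^ e₂)
            * (B 0 * B (i + j)) :=
          mul_le_mul (by gcongr) (hBsub i j) (by positivity) (by positivity)
      _ = _ := by ring
  calc ‖PowerSeries.coeff N (phi * psi)‖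
      ≤ ∑ _p ∈ antidiagonal N, c₁ * c₂ * B 0 * ((1 + N) ^ e₁ * (1 + N) ^ e₂) * B N := by
        rw [PowerSeries.coeff_mul]
        exact norm_sum_le_of_le _ hterm
    _ = c₁ * c₂ * B 0 * (1 + N) ^ (e₁ + e₂ + 1) * B N := by
        rw [sum_const, Nat.card_antidiagonal, Real.rpow_add (by positivity),
          Real.rpow_add (by positivity), Real.rpow_one, nsmul_eq_mul]
        push_cast
        ring

theorem tsum_eq_tsum_sum_antidiagonal {α : Type*} [AddCommMonoid α] [TopologicalSpace α]
    [ContinuousAdd α] [T3Space α] {u : ℕ × ℕ → α} (hu : Summable u) :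
    ∑' p, u p = ∑' N, ∑ p ∈ antidiagonal N, u p := by
  rw [← HasAntidiagonal.sigmaAntidiagonalEquivProd.tsum_eq u]
  exact (Summable.tsum_sigma' (fun N => Summable.of_finite)
    (HasAntidiagonal.sigmaAntidiagonalEquivProd.summable_iff.mpr hu)).trans
    (tsum_congr fun N => tsum_subtype (antidiagonal N) u)

theorem diffOp_diffOp {B : ℕ → ℝ} {c c₁ c₂ e e₁ e₂ : ℝ} {f : ℂ → ℂ} {phi psi : PowerSeries ℂ}
    (hBpos : ∀ n, 0 < B n) (hBmono : Monotone B)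
    (hBsub : ∀ m n : ℕ, B m * B n ≤ B 0 * B (m + n)) (he : 0 ≤ e)
    (hphi : CoeffBound B c₁ e₁ phi) (hpsi : CoeffBound B c₂ e₂ psi)
    (hfd : Differentiable ℂ f) (hf : IterDerivBound B c e f) :
    diffOp psi (diffOp phi f) = diffOp (phi * psi) f := by
  funext z
  set u : ℕ × ℕ → ℂ := fun p => PowerSeries.coeff p.1 psi *
    (PowerSeries.coeff p.2 phi * iteratedDeriv p.2 (iteratedDeriv p.1 f) z) with hu_def
  have hu : Summable u := by
    refine Summable.of_norm_bounded (g := fun p => c₂ * c₁ * c * B 0 * polyExpSum e ‖z‖ *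
      (polyExpTerm (e₂ + e) 1 p.1 * polyExpTerm (e₁ + e) 1 p.2)) ?_ ?_
    · exact ((summable_polyExpTerm _ zero_le_one).mul_of_nonneg
        (summable_polyExpTerm _ zero_le_one) (polyExpTerm_nonneg _ zero_le_one)
        (polyExpTerm_nonneg _ zero_le_one)).mul_left _
    · rintro ⟨m, n⟩
      have hc₂ := hpsi.const_nonneg (hBpos 0)
      have hBm := hBpos m
      have hn := norm_coeff_mul_iteratedDeriv_le hBpos hBmono he hphi
        (hfd.iteratedDeriv_complex m) (iterDerivBound_iteratedDeriv hBpos hBsub he hf m)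
        (le_refl ‖z‖) n
      rw [hu_def, norm_mul]
      calc _ ≤ (c₂ * (1 + m) ^ e₂ * B m) * (c₁ * (c * B 0 * derivWeight B e m)
              * polyExpSum e ‖z‖ * polyExpTerm (e₁ + e) 1 n) :=
            mul_le_mul (hpsi m) hn (norm_nonneg _) (by positivity)
        _ = c₂ * c₁ * c * B 0 * polyExpSum e ‖z‖ * ((1 + m) ^ e₂ * B m * derivWeight B e m
              * polyExpTerm (e₁ + e) 1 n) := by ring
        _ = _ := by rw [rpow_mul_mul_derivWeight hBm.ne']
  calc diffOp psi (diffOp phi f) z = ∑' m, ∑' n, u (m, n) := by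
        simp only [diffOp, iteratedDeriv_diffOp hBpos hBmono hBsub he hphi hfd hf, hu_def,
          tsum_mul_left]
    _ = ∑' p, u p := hu.tsum_prod.symm
    _ = ∑' N, ∑ p ∈ antidiagonal N, u p := tsum_eq_tsum_sum_antidiagonal hu
    _ = diffOp (phi * psi) f z := by
        rw [diffOp, mul_comm phi psi]
        refine tsum_congr fun N => ?_
        rw [PowerSeries.coeff_mul, sum_mul]
        refine sum_congr rfl fun p hp => ?_
        simp only [hu_def, iteratedDeriv_iteratedDeriv]
        rw [add_comm p.2, HasAntidiagonal.mem_antidiagonal.mp hp]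
        ring

/-- Lemma 3.1: if `B` is increasing, positive, `BₘBₙ ≤ B₀B_{m+n}`,
`phi, psi ≺ ⟨n!Bₙ⟩` and the entire function `f` satisfies `f ≺ ⟨(n!Bₙ)⁻¹⟩`, then
`phi·psi ≺ ⟨n!Bₙ⟩`, `f ∈ dom phi(D)`, `phi(D)f ≺ ⟨(n!Bₙ)⁻¹⟩`, and
`psi(D)(phi(D)f) = (phi·psi)(D)f`. -/
theorem stmt11 (B : ℕ → ℝ) (hBpos : ∀ n, 0 < B n) (hBmono : Monotone B)
    (hBsub : ∀ m n : ℕ, B m * B n ≤ B 0 * B (m + n))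
    (phi psi : PowerSeries ℂ) (hphi : psPrec B phi) (hpsi : psPrec B psi)
    (f : ℂ → ℂ) (hf : Differentiable ℂ f) (hfprec : funPrecInv B f) :
    psPrec B (phi * psi) ∧
    ∃ g h : ℂ → ℂ, domSeq phi f g ∧ funPrecInv B g ∧
      domSeq psi g h ∧ domSeq (phi * psi) f h := by
  obtain ⟨c₁, e₁, he₁, hphi⟩ := hphi.exists_coeffBound
  obtain ⟨c₂, e₂, he₂, hpsi⟩ := hpsi.exists_coeffBound
  obtain ⟨c, e, he, hfB⟩ := hfprec.exists_iterDerivBound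
  have hmul := hphi.mul hBpos hBsub he₁ he₂ hpsi
  have hg := iterDerivBound_diffOp hBpos hBmono hBsub he hphi hf hfB
  refine ⟨psPrec_of_coeffBound hBpos (by positivity) hmul, diffOp phi f,
    diffOp psi (diffOp phi f), domSeq_diffOp hBpos hBmono he hphi hf hfB,
    funPrecInv_of_iterDerivBound hBpos he hg,
    domSeq_diffOp hBpos hBmono he hpsi (differentiable_diffOp hBpos hBmono he hphi hf hfB) hg, ?_⟩
  rw [diffOp_diffOp hBpos hBmono hBsub he hphi hpsi hf hfB]
  exact domSeq_diffOp hBpos hBmono he hmul hf hfB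
end
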